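/- arXiv:2401.10527 — 3 statements merged into one kernel-verified Lean document; each statement's English description precedes it below -/
import Mathlib

section
/- Let U be the syndrome table afforded by e and τ, with ω(e) ≤ t, 1 ≤ t ≤ ⌊r₁/2⌋ and t ≤ ⌊r₂/2⌋. Let l = (a, t−a+1) with 0 < a ≤ t, let F be a minimal set of polynomials for u^l with delta-set Δ = Δ(F), and suppose some f ∈ F satisfies f[U]_l ≠ 0. Then l ∉ LP(F) + Δ (there are no g ∈ F and δ ∈ Δ with l = LP(g) + δ), and hence no n ∈ ℕ×ℕ with l ⪯ n belongs to Δ + LP(F). -/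
/-!
The syndrome table is a sum of at most `t` exponentials `n ↦ c_p (α₁^p₁)^n₁ (α₂^p₂)^n₂`,
`p ∈ supp e`. Linear algebra gives, on any set `S` of more than `ω(e)` exponents, a nonzero
polynomial supported on `S` vanishing at all nodes `(α₁^p₁, α₂^p₂)`, and such a polynomial is a
recurrence for the whole table. Minimality of `F` forbids this for `S ⊆ Δ`, so `|Δ| ≤ ω(e) ≤ t`.
On the other hand, if `n = s^(j) + δ` with `δ ∈ Δ`, the staircase `Δ` contains two boxes `Iic p`,
`Iic q` whose union has at least `n₁ + n₂` points, and `n ⪰ (a, t - a + 1)` makes this `t + 1`.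
-/

/-- A monomial order on `ℕ × ℕ`: a linear well-order compatible with addition that
refines the componentwise partial order. -/
structure MonomialOrder2 where
  le : ℕ × ℕ → ℕ × ℕ → Prop
  le_refl : ∀ a, le a a
  le_trans : ∀ a b c, le a b → le b c → le a c
  le_antisymm : ∀ a b, le a b → le b a → a = b
  le_total : ∀ a b, le a b ∨ le b a
  wf : WellFounded (fun a b : ℕ × ℕ => le a b ∧ a ≠ b)
  add_right : ∀ a b k, le a b → le (a + k) (b + k)
  refines : ∀ a b : ℕ × ℕ, a.1 ≤ b.1 → a.2 ≤ b.2 → le a b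

/-- Strict version of the monomial order. -/
def MonomialOrder2.lt (T : MonomialOrder2) (a b : ℕ × ℕ) : Prop :=
  T.le a b ∧ a ≠ b

section Defs

variable {L : Type*} [Field L]

/-- `IsLP T f s` says `s` is the leading power product exponent of `f` w.r.t. `T`. -/
def IsLP (T : MonomialOrder2) (f : AddMonoidAlgebra L (ℕ × ℕ)) (s : ℕ × ℕ) : Prop :=
  s ∈ f.coeff.support ∧ ∀ m ∈ f.coeff.support, T.le m s

/-- `recEval U f s n` is `f[U]_n`, where `s` is the leading power product exponent of `f`. -/
noncomputable def recEval (U : ℕ × ℕ → L) (f : AddMonoidAlgebra L (ℕ × ℕ))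
    (s n : ℕ × ℕ) : L :=
  if s.1 ≤ n.1 ∧ s.2 ≤ n.2 then ∑ m ∈ f.coeff.support, f.coeff m * U (m + n - s) else 0

/-- `Lambda T U l` is `Λ(u^l)`, the set of nonzero polynomials valid at all
`n` with `LP f ⪯ n` and `n <_T l`. -/
def Lambda (T : MonomialOrder2) (U : ℕ × ℕ → L) (l : ℕ × ℕ) :
    Set (AddMonoidAlgebra L (ℕ × ℕ)) :=
  { f | f ≠ 0 ∧ ∀ s n : ℕ × ℕ, IsLP T f s → s.1 ≤ n.1 → s.2 ≤ n.2 → T.lt n l →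
      recEval U f s n = 0 }

/-- `𝔏(U)`: nonzero polynomials generating the whole array `U`. -/
def LambdaU (T : MonomialOrder2) (U : ℕ × ℕ → L) :
    Set (AddMonoidAlgebra L (ℕ × ℕ)) :=
  { f | f ≠ 0 ∧ ∀ (s n : ℕ × ℕ), IsLP T f s → recEval U f s n = 0 }

/-- The footprint `Δ(U)` of the ideal of linear recurring relations of `U`. -/
def footprint (T : MonomialOrder2) (U : ℕ × ℕ → L) : Set (ℕ × ℕ) :=
  { n | ∀ f s, f ∈ LambdaU T U → IsLP T f s → ¬(s.1 ≤ n.1 ∧ s.2 ≤ n.2) }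

/-- A doubly periodic array of period `r₁ × r₂`. -/
def DoublyPeriodic (r₁ r₂ : ℕ) (U : ℕ × ℕ → L) : Prop :=
  ∀ n m : ℕ × ℕ, n.1 % r₁ = m.1 % r₁ → n.2 % r₂ = m.2 % r₂ → U n = U m

/-- Evaluation of a bivariate polynomial with coefficients in `L` at `(x, y)`. -/
noncomputable def evalAtL (f : AddMonoidAlgebra L (ℕ × ℕ)) (x y : L) : L :=
  ∑ m ∈ f.coeff.support, f.coeff m * x ^ m.1 * y ^ m.2

end Defs

/-- Evaluation of a bivariate polynomial with coefficients in `F` at a point of `L`. -/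
noncomputable def evalAt {F L : Type*} [Field F] [Field L] [Algebra F L]
    (e : AddMonoidAlgebra F (ℕ × ℕ)) (x y : L) : L :=
  ∑ s ∈ e.coeff.support, algebraMap F L (e.coeff s) * x ^ s.1 * y ^ s.2

/-- The index box `I = {0,…,r₁−1} × {0,…,r₂−1}`. -/
def Ibox (r₁ r₂ : ℕ) : Set (ℕ × ℕ) := { p | p.1 < r₁ ∧ p.2 < r₂ }

/-- `s^(1),…,s^(d)` (0-indexed: `s 0, …, s (d-1)`) is a sequence of defining points. -/
def IsDefPoints (d : ℕ) (s : ℕ → ℕ × ℕ) : Prop :=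
  0 < d ∧ (∀ i j, i < j → j < d → (s j).1 < (s i).1) ∧
    (∀ i j, i < j → j < d → (s i).2 < (s j).2) ∧
    (s (d - 1)).1 = 0 ∧ (s 0).2 = 0

/-- The delta-set of a sequence of defining points. -/
def deltaSet (d : ℕ) (s : ℕ → ℕ × ℕ) : Set (ℕ × ℕ) :=
  { m | ∃ i, i + 1 < d ∧ m.1 + 1 ≤ (s i).1 ∧ m.2 + 1 ≤ (s (i + 1)).2 }

/-- `IsMinimalSet T U l d s f`: `{f 0, …, f (d-1)}` is a minimal set of polynomials
for `u^l`, with defining points `s 0, …, s (d-1)`. -/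
def IsMinimalSet {L : Type*} [Field L] (T : MonomialOrder2) (U : ℕ × ℕ → L) (l : ℕ × ℕ)
    (d : ℕ) (s : ℕ → ℕ × ℕ) (f : ℕ → AddMonoidAlgebra L (ℕ × ℕ)) : Prop :=
  IsDefPoints d s ∧
    (∀ i, i < d → f i ∈ Lambda T U l ∧ IsLP T (f i) (s i)) ∧
    (∀ g sg, IsLP T g sg → sg ∈ deltaSet d s → g ∉ Lambda T U l)

/-- The set of indexes `𝒮(t)`. -/
def Sset (t : ℕ) : Set (ℕ × ℕ) :=
  { p | (p.1 = 0 ∧ p.2 ≤ 2 * t - 1) ∨ (p.2 = 0 ∧ p.1 ≤ 2 * t - 1) ∨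
      (1 ≤ p.1 ∧ 1 ≤ p.2 ∧ p.1 + p.2 ≤ t) }

open Finset

lemma Finset.Iic_inter_Iic {α : Type*} [Lattice α] [LocallyFiniteOrderBot α] [DecidableEq α]
    (a b : α) : Iic a ∩ Iic b = Iic (a ⊓ b) := by
  ext; simp

lemma card_Iic_union_Iic_of_le {p q : ℕ × ℕ} (h₁ : p.1 ≤ q.1) (h₂ : q.2 ≤ p.2) :
    #(Iic p ∪ Iic q) = (p.1 + 1) * (p.2 + 1) + (q.1 - p.1) * (q.2 + 1) := by
  have hunion := card_union_add_card_inter (Iic p) (Iic q)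
  have hinf : p ⊓ q = (p.1, q.2) := Prod.ext (min_eq_left h₁) (min_eq_right h₂)
  rw [Finset.Iic_inter_Iic, hinf] at hunion
  simp only [card_Iic_prod, Nat.card_Iic] at hunion
  have hsplit : (q.1 + 1) * (q.2 + 1) = (p.1 + 1) * (q.2 + 1) + (q.1 - p.1) * (q.2 + 1) := by
    rw [← add_mul]; congr 1; omega
  omega

lemma mem_deltaSet_of_le {d : ℕ} {s : ℕ → ℕ × ℕ} {p q : ℕ × ℕ} (hp : p ∈ deltaSet d s)
    (hqp : q ≤ p) : q ∈ deltaSet d s := by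
  obtain ⟨i, hi, h₁, h₂⟩ := hp
  exact ⟨i, hi, by have := hqp.1; omega, by have := hqp.2; omega⟩

lemma Iic_union_Iic_subset_deltaSet {d : ℕ} {s : ℕ → ℕ × ℕ} {p q : ℕ × ℕ}
    (hp : p ∈ deltaSet d s) (hq : q ∈ deltaSet d s) :
    (↑(Iic p ∪ Iic q) : Set (ℕ × ℕ)) ⊆ deltaSet d s := by
  intro m hm
  simp only [coe_union, coe_Iic, Set.mem_union, Set.mem_Iic] at hm
  exact hm.elim (mem_deltaSet_of_le hp) (mem_deltaSet_of_le hq)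

namespace IsDefPoints

variable {d : ℕ} {s : ℕ → ℕ × ℕ}

lemma fst_le_fst (hs : IsDefPoints d s) {i j : ℕ} (hij : i ≤ j) (hj : j < d) :
    (s j).1 ≤ (s i).1 := by
  rcases hij.eq_or_lt with rfl | hij
  · exact le_rfl
  · exact (hs.2.1 i j hij hj).le

lemma snd_le_snd (hs : IsDefPoints d s) {i j : ℕ} (hij : i ≤ j) (hj : j < d) :
    (s i).2 ≤ (s j).2 := by
  rcases hij.eq_or_lt with rfl | hij
  · exact le_rfl
  · exact (hs.2.2.1 i j hij hj).le

lemma exists_staircase_pair_of_interior (hs : IsDefPoints d s) {j : ℕ} (hj₀ : 0 < j)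
    (hj : j + 1 < d) {δ : ℕ × ℕ} (hδ : δ ∈ deltaSet d s) :
    ∃ p ∈ deltaSet d s, ∃ q ∈ deltaSet d s, p.1 ≤ q.1 ∧ q.2 ≤ p.2 ∧
      (s j).1 + δ.1 + ((s j).2 + δ.2) ≤ (p.1 + 1) * (p.2 + 1) + (q.1 - p.1) * (q.2 + 1) := by
  obtain ⟨k, hk, hδ₁, hδ₂⟩ := id hδ
  have hx : 0 < (s j).1 := by have := hs.2.1 j (d - 1) (by omega) (by omega); omega
  have hy : 0 < (s j).2 := by have := hs.2.2.1 0 j hj₀ (by omega); omega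
  have hA : ((s j).1, (s j).2 - 1) ∈ deltaSet d s :=
    ⟨j - 1, by omega, by have := hs.2.1 (j - 1) j (by omega) (by omega); simp; omega,
      by rw [Nat.sub_add_cancel hj₀]; simp; omega⟩
  have hB : ((s j).1 - 1, (s j).2) ∈ deltaSet d s :=
    ⟨j, hj, by simp; omega, by have := hs.2.2.1 j (j + 1) (by omega) hj; simp; omega⟩
  rcases Nat.lt_or_ge δ.2 (s j).2 with hδy | hδy
  · rcases Nat.lt_or_ge δ.1 (s j).1 with hδx | hδx
    · refine ⟨_, hB, _, hA, by simp, by simp, ?_⟩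
      simp only [Nat.sub_add_cancel hx, Nat.sub_sub_self hx, Nat.sub_add_cancel hy]
      zify [hx, hy] at hδx hδy ⊢
      nlinarith
    · refine ⟨_, hB, δ, hδ, by simp; omega, by simp; omega, ?_⟩
      zify [hx, show (s j).1 - 1 ≤ δ.1 by omega] at hδx hδy ⊢
      nlinarith
  · have hjk : j ≤ k := by
      by_contra! hkj
      have := hs.snd_le_snd (show k + 1 ≤ j by omega) (by omega)
      omega
    have hδx := hs.fst_le_fst hjk hk.le
    refine ⟨δ, hδ, _, hA, by simp; omega, by simp; omega, ?_⟩
    simp only [Nat.sub_add_cancel hy]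
    zify [show δ.1 ≤ (s j).1 by omega] at hy hδy hδ₁ hδx ⊢
    nlinarith

lemma exists_staircase_pair (hs : IsDefPoints d s) {j : ℕ} (hj : j < d) {δ : ℕ × ℕ}
    (hδ : δ ∈ deltaSet d s) (h₁ : 0 < (s j).1 + δ.1) (h₂ : 0 < (s j).2 + δ.2) :
    ∃ p ∈ deltaSet d s, ∃ q ∈ deltaSet d s, p.1 ≤ q.1 ∧ q.2 ≤ p.2 ∧
      (s j).1 + δ.1 + ((s j).2 + δ.2) ≤ (p.1 + 1) * (p.2 + 1) + (q.1 - p.1) * (q.2 + 1) := by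
  obtain ⟨k, hk, hδ₁, hδ₂⟩ := id hδ
  obtain ⟨-, hfst, hsnd, hlast, hfirst⟩ := id hs
  rcases Nat.eq_zero_or_pos j with rfl | hj₀
  · have hk₀ := hs.fst_le_fst (Nat.zero_le k) (by omega)
    have h01 := hsnd 0 1 (by omega) (by omega)
    refine ⟨δ, hδ, ((s 0).1 - 1, 0), ⟨0, by omega, by simp; omega, by simp; omega⟩,
      by simp; omega, by simp, ?_⟩
    simp only [hfirst, zero_add] at h₂ ⊢
    zify [show δ.1 ≤ (s 0).1 - 1 by omega, show 1 ≤ (s 0).1 by omega] at h₂ ⊢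
    nlinarith
  rcases Nat.lt_or_ge (j + 1) d with hjd | hjd
  · exact hs.exists_staircase_pair_of_interior hj₀ hjd hδ
  obtain rfl : j = d - 1 := by omega
  have hk₀ := hs.snd_le_snd (show k + 1 ≤ d - 1 by omega) hj
  have hd2 := hfst (d - 2) (d - 1) (by omega) hj
  refine ⟨(0, (s (d - 1)).2 - 1), ⟨d - 2, by omega, by simp; omega,
    by rw [show d - 2 + 1 = d - 1 by omega]; simp; omega⟩, δ, hδ, by simp, by simp; omega, ?_⟩
  simp only [hlast, zero_add] at h₁ ⊢
  simp only [one_mul, Nat.sub_zero, Nat.sub_add_cancel (show 1 ≤ (s (d - 1)).2 by omega)]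
  zify at h₁ ⊢
  nlinarith

lemma exists_finset_subset_deltaSet (hs : IsDefPoints d s) {j : ℕ} (hj : j < d)
    {δ : ℕ × ℕ} (hδ : δ ∈ deltaSet d s) (h₁ : 0 < (s j).1 + δ.1) (h₂ : 0 < (s j).2 + δ.2) :
    ∃ S : Finset (ℕ × ℕ), ↑S ⊆ deltaSet d s ∧ (s j).1 + δ.1 + ((s j).2 + δ.2) ≤ #S := by
  obtain ⟨p, hp, q, hq, hpq₁, hpq₂, hle⟩ := hs.exists_staircase_pair hj hδ h₁ h₂
  exact ⟨_, Iic_union_Iic_subset_deltaSet hp hq, (card_Iic_union_Iic_of_le hpq₁ hpq₂) ▸ hle⟩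

end IsDefPoints

lemma MonomialOrder2.exists_forall_le (T : MonomialOrder2) {S : Finset (ℕ × ℕ)}
    (hS : S.Nonempty) : ∃ s ∈ S, ∀ m ∈ S, T.le m s := by
  induction hS using Finset.Nonempty.cons_induction with
  | singleton a => exact ⟨a, mem_singleton_self a, fun m hm => mem_singleton.1 hm ▸ T.le_refl a⟩
  | cons a S _ _ ih =>
    obtain ⟨s, hs, hmax⟩ := ih
    rcases T.le_total a s with has | hsa
    · exact ⟨s, mem_cons_of_mem hs, (forall_mem_cons _ _).2 ⟨has, hmax⟩⟩
    · exact ⟨a, mem_cons_self a S,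
        (forall_mem_cons _ _).2 ⟨T.le_refl a, fun m hm => T.le_trans _ _ _ (hmax m hm) hsa⟩⟩

section Recurrence

variable {L : Type*} [Field L]

lemma MonomialOrder2.exists_isLP (T : MonomialOrder2) {G : AddMonoidAlgebra L (ℕ × ℕ)}
    (hG : G ≠ 0) : ∃ s, IsLP T G s :=
  T.exists_forall_le (Finsupp.support_nonempty_iff.2 (G.coeff_eq_zero.not.2 hG))

lemma exists_ne_zero_support_subset_evalAtL_eq_zero {ι : Type*} [Fintype ι] (x y : ι → L)
    {S : Finset (ℕ × ℕ)} (hS : Fintype.card ι < #S) :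
    ∃ G : AddMonoidAlgebra L (ℕ × ℕ), G ≠ 0 ∧ G.coeff.support ⊆ S ∧
      ∀ i, evalAtL G (x i) (y i) = 0 := by
  let v : ℕ × ℕ → ι → L := fun m i => x i ^ m.1 * y i ^ m.2
  have hdep : ¬ LinearIndepOn L v (S : Set (ℕ × ℕ)) := fun hli => by
    have := hli.fintype_card_le_finrank
    simp only [Module.finrank_fintype_fun_eq_card, Finset.coe_sort_coe, Fintype.card_coe] at this
    omega
  obtain ⟨l, hlS, hl0, hl⟩ := linearDepOn_iff'.mp hdep
  refine ⟨AddMonoidAlgebra.ofCoeff l, by simpa, by simpa [Finsupp.mem_supported] using hlS,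
    fun i => ?_⟩
  simpa [evalAtL, Finsupp.linearCombination_apply, Finsupp.sum, v, mul_assoc]
    using congrFun hl0 i

lemma recEval_eq_zero_of_evalAtL_eq_zero {ι : Type*} [Fintype ι] {U : ℕ × ℕ → L}
    {c x y : ι → L} (hU : ∀ n, U n = ∑ i, c i * x i ^ n.1 * y i ^ n.2)
    {G : AddMonoidAlgebra L (ℕ × ℕ)} (hG : ∀ i, evalAtL G (x i) (y i) = 0) (s n : ℕ × ℕ) :
    recEval U G s n = 0 := by
  unfold recEval
  split_ifs with hsn
  · calc ∑ m ∈ G.coeff.support, G.coeff m * U (m + n - s)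
          = ∑ i, c i * x i ^ (n.1 - s.1) * y i ^ (n.2 - s.2) * evalAtL G (x i) (y i) := by
            simp only [hU, evalAtL, Finset.mul_sum]
            rw [Finset.sum_comm]
            refine sum_congr rfl fun i _ => sum_congr rfl fun m _ => ?_
            have h₁ : (m + n - s).1 = m.1 + (n.1 - s.1) := by simp; omega
            have h₂ : (m + n - s).2 = m.2 + (n.2 - s.2) := by simp; omega
            rw [h₁, h₂, pow_add, pow_add]
            ring
      _ = 0 := by simp [hG]
  · rfl

theorem IsMinimalSet.card_le_of_subset_deltaSet {T : MonomialOrder2}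
    {U : ℕ × ℕ → L} {l : ℕ × ℕ} {d : ℕ} {s : ℕ → ℕ × ℕ} {f : ℕ → AddMonoidAlgebra L (ℕ × ℕ)}
    {ι : Type*} [Fintype ι] {c x y : ι → L} (hU : ∀ n, U n = ∑ i, c i * x i ^ n.1 * y i ^ n.2)
    (hF : IsMinimalSet T U l d s f) {S : Finset (ℕ × ℕ)} (hS : ↑S ⊆ deltaSet d s) :
    #S ≤ Fintype.card ι := by
  by_contra! hcard
  obtain ⟨G, hG0, hGS, hGeval⟩ := exists_ne_zero_support_subset_evalAtL_eq_zero x y hcard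
  obtain ⟨sG, hsG⟩ := T.exists_isLP hG0
  exact hF.2.2 G sG hsG (hS (hGS hsG.1))
    ⟨hG0, fun s' n _ _ _ _ => recEval_eq_zero_of_evalAtL_eq_zero hU hGeval s' n⟩

end Recurrence

lemma evalAt_pow_add_eq_sum {F L : Type*} [Field F] [Field L] [Algebra F L]
    (e : AddMonoidAlgebra F (ℕ × ℕ)) (α₁ α₂ : L) (τ n : ℕ × ℕ) :
    evalAt e (α₁ ^ (τ.1 + n.1)) (α₂ ^ (τ.2 + n.2)) =
      ∑ p : e.coeff.support, algebraMap F L (e.coeff p) * (α₁ ^ p.1.1) ^ τ.1 *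
        (α₂ ^ p.1.2) ^ τ.2 * (α₁ ^ p.1.1) ^ n.1 * (α₂ ^ p.1.2) ^ n.2 := by
  rw [evalAt, ← Finset.sum_coe_sort]
  refine Fintype.sum_congr _ _ fun p => ?_
  simp only [← pow_mul, pow_add]
  ring

theorem stmt_9_general (T : MonomialOrder2) {F L : Type*} [Field F] [Field L]
    [Algebra F L] (t : ℕ)
    (α₁ α₂ : L)
    (e : AddMonoidAlgebra F (ℕ × ℕ))
    (hω : e.coeff.support.card ≤ t)
    (τ : ℕ × ℕ) (U : ℕ × ℕ → L)
    (hU : ∀ n : ℕ × ℕ, U n = evalAt e (α₁ ^ (τ.1 + n.1)) (α₂ ^ (τ.2 + n.2)))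
    (a : ℕ) (ha : 0 < a) (hat : a ≤ t)
    (d : ℕ) (s : ℕ → ℕ × ℕ) (f : ℕ → AddMonoidAlgebra L (ℕ × ℕ))
    (hmin : IsMinimalSet T U (a, t - a + 1) d s f) :
    (∀ j, j < d → ∀ δ ∈ deltaSet d s, (a, t - a + 1) ≠ s j + δ) ∧
      (∀ n : ℕ × ℕ, a ≤ n.1 → t - a + 1 ≤ n.2 →
        ∀ j, j < d → ∀ δ ∈ deltaSet d s, n ≠ s j + δ) := by
  have key : ∀ n : ℕ × ℕ, a ≤ n.1 → t - a + 1 ≤ n.2 →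
      ∀ j, j < d → ∀ δ ∈ deltaSet d s, n ≠ s j + δ := by
    rintro n h₁ h₂ j hj δ hδ rfl
    simp only [Prod.fst_add, Prod.snd_add] at h₁ h₂
    obtain ⟨S, hSΔ, hS⟩ :=
      hmin.1.exists_finset_subset_deltaSet hj hδ (by omega) (by omega)
    have hcard := hmin.card_le_of_subset_deltaSet
      (fun n => (hU n).trans (evalAt_pow_add_eq_sum e α₁ α₂ τ n)) hSΔ
    rw [Fintype.card_coe] at hcard
    omega
  exact ⟨fun j hj δ hδ => key _ le_rfl le_rfl j hj δ hδ, key⟩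

/-- if `l = (a, t−a+1)` with `0 < a ≤ t` and some `f ∈ F` has
`f[U]_l ≠ 0`, then `l ∉ LP(F) + Δ`, and no `n ⪰ l` lies in `Δ + LP(F)`. -/
theorem stmt_9 (T : MonomialOrder2) {F L : Type*} [Field F] [Fintype F] [Field L]
    [Algebra F L] (r₁ r₂ t : ℕ) (ht : 1 ≤ t) (ht₁ : t ≤ r₁ / 2) (ht₂ : t ≤ r₂ / 2)
    (hq : Nat.Coprime (r₁ * r₂) (Fintype.card F))
    (α₁ α₂ : L) (hα₁ : IsPrimitiveRoot α₁ r₁) (hα₂ : IsPrimitiveRoot α₂ r₂)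
    (e : AddMonoidAlgebra F (ℕ × ℕ)) (he : ↑e.coeff.support ⊆ Ibox r₁ r₂)
    (hω : e.coeff.support.card ≤ t)
    (τ : ℕ × ℕ) (hτ : τ ∈ Ibox r₁ r₂) (U : ℕ × ℕ → L)
    (hU : ∀ n : ℕ × ℕ, U n = evalAt e (α₁ ^ (τ.1 + n.1)) (α₂ ^ (τ.2 + n.2)))
    (a : ℕ) (ha : 0 < a) (hat : a ≤ t)
    (d : ℕ) (s : ℕ → ℕ × ℕ) (f : ℕ → AddMonoidAlgebra L (ℕ × ℕ))
    (hmin : IsMinimalSet T U (a, t - a + 1) d s f)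
    (hex : ∃ i, i < d ∧ recEval U (f i) (s i) (a, t - a + 1) ≠ 0) :
    (∀ j, j < d → ∀ δ ∈ deltaSet d s, (a, t - a + 1) ≠ s j + δ) ∧
      (∀ n : ℕ × ℕ, a ≤ n.1 → t - a + 1 ≤ n.2 →
        ∀ j, j < d → ∀ δ ∈ deltaSet d s, n ≠ s j + δ) :=
  stmt_9_general T t α₁ α₂ e hω τ U hU a ha hat d s f hmin
end

section
/- Let U be the syndrome table afforded by e and τ, with ω(e) ≤ t, 1 ≤ t ≤ ⌊r₁/2⌋ and t ≤ ⌊r₂/2⌋. Let l ∈ ℕ×ℕ be of the form l = (l₁, 0) with l₁ > 2t−1, or l = (0, l₂) with l₂ > 2t−1, and let F be a minimal set of polynomials for u^l. Then f[U]_l = 0 for every f ∈ F. -/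
open Finset Polynomial

namespace MonomialOrder2

theorem le_of_le (T : MonomialOrder2) {a b : ℕ × ℕ} (h : a ≤ b) : T.le a b :=
  T.refines a b h.1 h.2

theorem lt_of_lt (T : MonomialOrder2) {a b : ℕ × ℕ} (h : a < b) : T.lt a b :=
  ⟨T.le_of_le h.le, h.ne⟩

end MonomialOrder2

section Recurrence

variable {L : Type*} [Field L]

theorem IsLP.unique {T : MonomialOrder2} {f : AddMonoidAlgebra L (ℕ × ℕ)} {s s' : ℕ × ℕ}
    (h : IsLP T f s) (h' : IsLP T f s') : s = s' :=
  T.le_antisymm _ _ (h'.2 s h.1) (h.2 s' h'.1)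

theorem recEval_of_le (U : ℕ × ℕ → L) (f : AddMonoidAlgebra L (ℕ × ℕ)) {s n : ℕ × ℕ}
    (h : s ≤ n) :
    recEval U f s n = ∑ m ∈ f.coeff.support, f.coeff m * U (m + (n - s)) := by
  rw [recEval, if_pos (show s.1 ≤ n.1 ∧ s.2 ≤ n.2 from h)]
  simp only [add_tsub_assoc_of_le h]

theorem recEval_of_not_le (U : ℕ × ℕ → L) (f : AddMonoidAlgebra L (ℕ × ℕ)) {s n : ℕ × ℕ}
    (h : ¬s ≤ n) : recEval U f s n = 0 :=
  if_neg h

theorem Finset.eq_zero_of_sum_mul_pow_eq_zero (B : Finset L) (c : L → L)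
    (h : ∀ k < B.card, ∑ β ∈ B, c β * β ^ k = 0) : ∀ β ∈ B, c β = 0 := by
  let e := B.equivFin.symm
  have hzero : (fun j => c (e j)) = 0 := by
    refine Matrix.eq_zero_of_forall_pow_sum_mul_pow_eq_zero (f := fun j => (e j : L))
      (fun i j hij => e.injective (Subtype.ext hij)) fun k => ?_
    rw [e.sum_comp (fun β : B => c β * (β : L) ^ (k : ℕ)),
      Finset.sum_coe_sort B (fun β => c β * β ^ (k : ℕ))]
    exact h k k.2
  intro β hβ
  simpa [e] using congrFun hzero (e.symm ⟨β, hβ⟩)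

def GeomSumAlong (U : ℕ × ℕ → L) (v : ℕ × ℕ) (B : Finset L) : Prop :=
  ∃ ψ : L → ℕ × ℕ → L, ∀ n k, U (n + k • v) = ∑ β ∈ B, ψ β n * β ^ k

theorem GeomSumAlong.exists_of_sum {ι : Type*} {U : ℕ × ℕ → L} {v : ℕ × ℕ} (S : Finset ι)
    (b : ι → L) (g : ι → ℕ × ℕ → L) (h : ∀ n k, U (n + k • v) = ∑ x ∈ S, g x n * b x ^ k) :
    ∃ B : Finset L, B.card ≤ S.card ∧ GeomSumAlong U v B := by
  classical
  refine ⟨S.image b, card_image_le, fun β n => ∑ x ∈ S with b x = β, g x n, fun n k => ?_⟩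
  rw [h, ← sum_fiberwise_of_maps_to fun x hx => mem_image_of_mem b hx]
  refine sum_congr rfl fun β _ => ?_
  rw [sum_mul]
  exact sum_congr rfl fun x hx => by rw [(mem_filter.1 hx).2]

theorem GeomSumAlong.exists_isLP_mem_Lambda {U : ℕ × ℕ → L} {v : ℕ × ℕ} {B : Finset L}
    (hU : GeomSumAlong U v B) (hv : v ≠ 0) (T : MonomialOrder2) :
    ∃ p : AddMonoidAlgebra L (ℕ × ℕ), IsLP T p (B.card • v) ∧ ∀ l, p ∈ Lambda T U l := by
  obtain ⟨ψ, hψ⟩ := hU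
  set P : L[X] := ∏ β ∈ B, (X - C β)
  have hPdeg : P.natDegree = B.card := natDegree_finsetProd_X_sub_C_eq_card B id
  have hPmonic : P.Monic := monic_prod_of_monic _ _ fun β _ => monic_X_sub_C β
  have hProot : ∀ β ∈ B, P.eval β = 0 := fun β hβ => by
    rw [eval_prod]
    exact prod_eq_zero hβ (by simp)
  let emb : ℕ ↪ ℕ × ℕ := ⟨(· • v), (nsmul_left_strictMono (pos_iff_ne_zero.mpr hv)).injective⟩
  let p : AddMonoidAlgebra L (ℕ × ℕ) := .ofCoeff (P.toFinsupp.coeff.embDomain emb)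
  have hcoeff : ∀ j, p.coeff (j • v) = P.coeff j := Finsupp.embDomain_apply_self emb _
  have hsupp : p.coeff.support = P.support.map emb := Finsupp.support_embDomain _ _
  have hLP : IsLP T p (B.card • v) := by
    refine ⟨?_, fun m hm => ?_⟩
    · rw [Finsupp.mem_support_iff, hcoeff, ← hPdeg, hPmonic.coeff_natDegree]
      exact one_ne_zero
    · obtain ⟨j, hj, rfl⟩ := mem_map.1 (hsupp ▸ hm)
      exact T.le_of_le (nsmul_le_nsmul_left zero_le (hPdeg ▸ le_natDegree_of_mem_supp j hj))
  refine ⟨p, hLP, fun l => ⟨fun hp => by simpa [hp] using hLP.1, fun s n hs hsn₁ hsn₂ _ => ?_⟩⟩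
  obtain rfl := hs.unique hLP
  rw [recEval_of_le U p ⟨hsn₁, hsn₂⟩, hsupp, sum_map]
  calc ∑ j ∈ P.support, p.coeff (j • v) * U (j • v + (n - B.card • v))
      = ∑ β ∈ B, ψ β (n - B.card • v) * P.eval β := by
        simp_rw [hcoeff, add_comm _ (n - _), hψ, eval_eq_sum, Polynomial.sum, mul_sum]
        rw [sum_comm]
        exact sum_congr rfl fun β _ => sum_congr rfl fun j _ => by ring
    _ = 0 := sum_eq_zero fun β hβ => by rw [hProot β hβ, mul_zero]

theorem recEval_eq_zero_of_geomSumAlong {T : MonomialOrder2} {U : ℕ × ℕ → L} {v : ℕ × ℕ}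
    {B : Finset L} {f : AddMonoidAlgebra L (ℕ × ℕ)} {s l : ℕ × ℕ} {N : ℕ}
    (hU : GeomSumAlong U v B) (hv : v ≠ 0) (hf : f ∈ Lambda T U l) (hs : IsLP T f s)
    (hN : B.card ≤ N) (hl : l = s + N • v) : recEval U f s l = 0 := by
  obtain ⟨ψ, hψ⟩ := hU
  set c : L → L := fun β => ∑ m ∈ f.coeff.support, f.coeff m * ψ β m
  have hline : ∀ k, recEval U f s (s + k • v) = ∑ β ∈ B, c β * β ^ k := fun k => by
    rw [recEval_of_le U f le_self_add, add_tsub_cancel_left]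
    simp_rw [hψ, mul_sum, c, sum_mul]
    rw [sum_comm]
    exact sum_congr rfl fun β _ => sum_congr rfl fun m _ => by ring
  have hzero : ∀ k < N, ∑ β ∈ B, c β * β ^ k = 0 := fun k hk => by
    have hlt : s + k • v < l :=
      hl ▸ add_lt_add_right (nsmul_left_strictMono (pos_iff_ne_zero.mpr hv) hk) s
    have hle : s ≤ s + k • v := le_self_add
    rw [← hline]
    exact hf.2 s _ hs hle.1 hle.2 (T.lt_of_lt hlt)
  have hc := B.eq_zero_of_sum_mul_pow_eq_zero c fun k hk => hzero k (hk.trans_le hN)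
  rw [hl, hline]
  exact sum_eq_zero fun β hβ => by rw [hc β hβ, zero_mul]

theorem geomSumAlong_evalAt {F : Type*} [Field F] [Algebra F L]
    (e : AddMonoidAlgebra F (ℕ × ℕ)) (α₁ α₂ : L) (τ : ℕ × ℕ) (U : ℕ × ℕ → L)
    (hU : ∀ n : ℕ × ℕ, U n = evalAt e (α₁ ^ (τ.1 + n.1)) (α₂ ^ (τ.2 + n.2))) (v : ℕ × ℕ) :
    ∃ B : Finset L, B.card ≤ e.coeff.support.card ∧ GeomSumAlong U v B := by
  refine GeomSumAlong.exists_of_sum e.coeff.support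
    (fun x => α₁ ^ (v.1 * x.1) * α₂ ^ (v.2 * x.2))
    (fun x n => algebraMap F L (e.coeff x) * α₁ ^ ((τ.1 + n.1) * x.1) * α₂ ^ ((τ.2 + n.2) * x.2))
    fun n k => ?_
  rw [hU, evalAt]
  refine sum_congr rfl fun x _ => ?_
  simp only [Prod.fst_add, Prod.snd_add, Prod.smul_fst, Prod.smul_snd, smul_eq_mul]
  ring

end Recurrence

namespace IsMinimalSet

variable {L : Type*} [Field L] {T : MonomialOrder2} {U : ℕ × ℕ → L} {l : ℕ × ℕ} {d : ℕ}
  {s : ℕ → ℕ × ℕ} {f : ℕ → AddMonoidAlgebra L (ℕ × ℕ)}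

theorem fst_le_of_isLP (hmin : IsMinimalSet T U l d s f) {g : AddMonoidAlgebra L (ℕ × ℕ)}
    {N : ℕ} (hg : g ∈ Lambda T U l) (hgN : IsLP T g (N, 0)) : (s 0).1 ≤ N := by
  obtain ⟨⟨hd, -, hsnd, hlast, hfirst⟩, -, hmax⟩ := hmin
  by_contra! hN
  obtain rfl | hd : d = 1 ∨ 2 ≤ d := by omega
  · simp only [Nat.sub_self] at hlast
    omega
  · have := hsnd 0 1 one_pos hd
    exact hmax g (N, 0) hgN ⟨0, hd, hN, by simp only [zero_add]; omega⟩ hg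

theorem snd_le_of_isLP (hmin : IsMinimalSet T U l d s f) {g : AddMonoidAlgebra L (ℕ × ℕ)}
    {N : ℕ} (hg : g ∈ Lambda T U l) (hgN : IsLP T g (0, N)) : (s (d - 1)).2 ≤ N := by
  obtain ⟨⟨hd, hfst, -, hlast, hfirst⟩, -, hmax⟩ := hmin
  by_contra! hN
  obtain rfl | hd : d = 1 ∨ 2 ≤ d := by omega
  · simp only [Nat.sub_self] at hN
    omega
  · have := hfst (d - 2) (d - 1) (by omega) (by omega)
    refine hmax g (0, N) hgN ⟨d - 2, by omega, by simp only; omega, ?_⟩ hg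
    rwa [show d - 2 + 1 = d - 1 by omega]

theorem recEval_eq_zero_of_fst_axis (hmin : IsMinimalSet T U l d s f) {B : Finset L}
    (hU : GeomSumAlong U (1, 0) B) (hl : l.2 = 0) (hB : 2 * B.card ≤ l.1) {i : ℕ}
    (hi : i < d) : recEval U (f i) (s i) l = 0 := by
  have ⟨⟨_, _, hsnd, _, hfirst⟩, hmem, _⟩ := hmin
  obtain rfl | hi₀ := Nat.eq_zero_or_pos i
  · obtain ⟨p, hpLP, hpL⟩ := hU.exists_isLP_mem_Lambda (by simp) T
    have hs : (s 0).1 ≤ B.card := hmin.fst_le_of_isLP (hpL l) (by simpa using hpLP)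
    refine recEval_eq_zero_of_geomSumAlong hU (by simp) (hmem 0 hi).1 (hmem 0 hi).2
      (N := l.1 - (s 0).1) (by omega) (Prod.ext ?_ ?_) <;>
      simp only [Prod.fst_add, Prod.snd_add, Prod.smul_fst, Prod.smul_snd, smul_eq_mul] <;> omega
  · have := hsnd 0 i hi₀ hi
    exact recEval_of_not_le U _ fun h => absurd h.2 (by omega)

theorem recEval_eq_zero_of_snd_axis (hmin : IsMinimalSet T U l d s f) {B : Finset L}
    (hU : GeomSumAlong U (0, 1) B) (hl : l.1 = 0) (hB : 2 * B.card ≤ l.2) {i : ℕ}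
    (hi : i < d) : recEval U (f i) (s i) l = 0 := by
  have ⟨⟨_, hfst, _, hlast, _⟩, hmem, _⟩ := hmin
  obtain rfl | hi' : i = d - 1 ∨ i < d - 1 := by omega
  · obtain ⟨p, hpLP, hpL⟩ := hU.exists_isLP_mem_Lambda (by simp) T
    have hs : (s (d - 1)).2 ≤ B.card := hmin.snd_le_of_isLP (hpL l) (by simpa using hpLP)
    refine recEval_eq_zero_of_geomSumAlong hU (by simp) (hmem _ hi).1 (hmem _ hi).2
      (N := l.2 - (s (d - 1)).2) (by omega) (Prod.ext ?_ ?_) <;>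
      simp only [Prod.fst_add, Prod.snd_add, Prod.smul_fst, Prod.smul_snd, smul_eq_mul] <;> omega
  · have := hfst i (d - 1) hi' (by omega)
    exact recEval_of_not_le U _ fun h => absurd h.1 (by omega)

end IsMinimalSet

theorem stmt_10_general (T : MonomialOrder2) {F L : Type*} [Field F] [Field L] [Algebra F L] (t : ℕ)
    (α₁ α₂ : L) (e : AddMonoidAlgebra F (ℕ × ℕ)) (hω : e.coeff.support.card ≤ t)
    (τ : ℕ × ℕ) (U : ℕ × ℕ → L)
    (hU : ∀ n : ℕ × ℕ, U n = evalAt e (α₁ ^ (τ.1 + n.1)) (α₂ ^ (τ.2 + n.2)))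
    (l : ℕ × ℕ) (hl : (l.2 = 0 ∧ 2 * t - 1 < l.1) ∨ (l.1 = 0 ∧ 2 * t - 1 < l.2))
    (d : ℕ) (s : ℕ → ℕ × ℕ) (f : ℕ → AddMonoidAlgebra L (ℕ × ℕ))
    (hmin : IsMinimalSet T U l d s f) :
    ∀ i, i < d → recEval U (f i) (s i) l = 0 := by
  intro i hi
  rcases hl with ⟨hl₂, hl₁⟩ | ⟨hl₁, hl₂⟩
  · obtain ⟨B, hB, hUB⟩ := geomSumAlong_evalAt e α₁ α₂ τ U hU (1, 0)
    exact hmin.recEval_eq_zero_of_fst_axis hUB hl₂ (by omega) hi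
  · obtain ⟨B, hB, hUB⟩ := geomSumAlong_evalAt e α₁ α₂ τ U hU (0, 1)
    exact hmin.recEval_eq_zero_of_snd_axis hUB hl₁ (by omega) hi

/-- if `l = (l₁, 0)` with `l₁ > 2t−1`, or `l = (0, l₂)` with
`l₂ > 2t−1`, then `f[U]_l = 0` for every `f` in a minimal set for `u^l`. -/
theorem stmt_10 (T : MonomialOrder2) {F L : Type*} [Field F] [Fintype F] [Field L]
    [Algebra F L] (r₁ r₂ t : ℕ) (ht : 1 ≤ t) (ht₁ : t ≤ r₁ / 2) (ht₂ : t ≤ r₂ / 2)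
    (hq : Nat.Coprime (r₁ * r₂) (Fintype.card F))
    (α₁ α₂ : L) (hα₁ : IsPrimitiveRoot α₁ r₁) (hα₂ : IsPrimitiveRoot α₂ r₂)
    (e : AddMonoidAlgebra F (ℕ × ℕ)) (he : ↑e.coeff.support ⊆ Ibox r₁ r₂)
    (hω : e.coeff.support.card ≤ t)
    (τ : ℕ × ℕ) (hτ : τ ∈ Ibox r₁ r₂) (U : ℕ × ℕ → L)
    (hU : ∀ n : ℕ × ℕ, U n = evalAt e (α₁ ^ (τ.1 + n.1)) (α₂ ^ (τ.2 + n.2)))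
    (l : ℕ × ℕ) (hl : (l.2 = 0 ∧ 2 * t - 1 < l.1) ∨ (l.1 = 0 ∧ 2 * t - 1 < l.2))
    (d : ℕ) (s : ℕ → ℕ × ℕ) (f : ℕ → AddMonoidAlgebra L (ℕ × ℕ))
    (hmin : IsMinimalSet T U l d s f) :
    ∀ i, i < d → recEval U (f i) (s i) l = 0 :=
  stmt_10_general T t α₁ α₂ e hω τ U hU l hl d s f hmin
end

section
/- Let t, r₁, r₂ be positive integers with t ≤ ⌊r₁/2⌋ and t ≤ ⌊r₂/2⌋. Let e, e' ∈ 𝔽[X₁,X₂] with supp(e) ⊆ I, supp(e') ⊆ I, ω(e) ≤ t and ω(e') ≤ t, and let τ ∈ I. If e(α̅^{n+τ}) = e'(α̅^{n+τ}) for all n ∈ 𝒮(t), then e = e'. -/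
/-!
Put `f = e - e'`: it has at most `2t` monomials, all in the box, and the shift by `τ` only
multiplies its coefficients by nonzero constants. Let `a` be the number of rows (distinct first
exponents) of `f`. As `α₁, α₂` are primitive, the powers `α₁ ^ i`, `α₂ ^ j` separate rows and
columns, so if the shifted evaluations vanish on an `a × k` rectangle of exponents, a Vandermonde
argument in `α₁` kills the first `k` partial sums of every row, and a second one in `α₂` then forces
every row to have more than `k` monomials. `𝒮(t)` contains such a rectangle with `a (k + 1) > 2t`.
-/

open Finset

theorem eq_zero_of_forall_sum_mul_pow_eq_zero {R ι : Type*} [CommRing R] [IsDomain R]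
    {s : Finset ι} {x c : ι → R} (hx : Set.InjOn x s)
    (h : ∀ n < #s, ∑ i ∈ s, c i * x i ^ n = 0) : ∀ i ∈ s, c i = 0 := by
  have hfin := Matrix.eq_zero_of_forall_pow_sum_mul_pow_eq_zero
    (f := fun j => x (s.equivFin.symm j)) (v := fun j => c (s.equivFin.symm j))
    (fun j j' hj => s.equivFin.symm.injective (Subtype.ext (hx (s.equivFin.symm j).2
      (s.equivFin.symm j').2 hj)))
    (fun n => by
      rw [← h n n.2, ← s.sum_coe_sort]
      exact s.equivFin.symm.sum_comp (fun i : s => c i * x i ^ (n : ℕ)))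
  intro i hi
  simpa using congrFun hfin (s.equivFin ⟨i, hi⟩)

theorem sum_fiber_eq_zero_of_forall_sum_mul_pow_eq_zero {R ι κ : Type*} [CommRing R] [IsDomain R]
    [DecidableEq κ] {s : Finset ι} {p : ι → κ} {x : κ → R} {c : ι → R}
    (hx : Set.InjOn x (s.image p))
    (h : ∀ n < #(s.image p), ∑ i ∈ s, c i * x (p i) ^ n = 0) :
    ∀ j ∈ s.image p, ∑ i ∈ s with p i = j, c i = 0 := by
  refine eq_zero_of_forall_sum_mul_pow_eq_zero hx fun n hn => ?_
  rw [← h n hn, ← sum_fiberwise_of_maps_to (fun i hi => mem_image_of_mem p hi)]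
  refine sum_congr rfl fun j _ => ?_
  rw [sum_mul]
  exact sum_congr rfl fun i hi => by rw [(mem_filter.mp hi).2]

theorem card_image_fst_mul_le_card {R : Type*} [CommRing R] [IsDomain R]
    {s : Finset (ℕ × ℕ)} {c : ℕ × ℕ → R} {x y : ℕ → R} (hc : ∀ m ∈ s, c m ≠ 0)
    (hx : Set.InjOn x (s.image Prod.fst)) (hy : Set.InjOn y (s.image Prod.snd)) (k : ℕ)
    (h : ∀ n₁ < #(s.image Prod.fst), ∀ n₂ < k, ∑ m ∈ s, c m * x m.1 ^ n₁ * y m.2 ^ n₂ = 0) :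
    #(s.image Prod.fst) * (k + 1) ≤ #s := by
  have hrow : ∀ n₂ < k, ∀ i ∈ s.image Prod.fst, ∑ m ∈ s with m.1 = i, c m * y m.2 ^ n₂ = 0 :=
    fun n₂ hn₂ => sum_fiber_eq_zero_of_forall_sum_mul_pow_eq_zero hx fun n₁ hn₁ => by
      simpa only [mul_right_comm] using h n₁ hn₁ n₂ hn₂
  have hlong : ∀ i ∈ s.image Prod.fst, k + 1 ≤ #{m ∈ s | m.1 = i} := by
    intro i hi
    by_contra! hshort
    obtain ⟨m, hm, rfl⟩ := mem_image.mp hi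
    have hyrow : Set.InjOn (fun m : ℕ × ℕ => y m.2) ↑({m' ∈ s | m'.1 = m.1}) := by
      intro a ha b hb hab
      simp only [mem_coe, mem_filter] at ha hb
      exact Prod.ext (ha.2.trans hb.2.symm)
        (hy (mem_image_of_mem _ ha.1) (mem_image_of_mem _ hb.1) hab)
    exact hc m hm (eq_zero_of_forall_sum_mul_pow_eq_zero hyrow
      (fun n hn => hrow n (by omega) m.1 hi) m (mem_filter.mpr ⟨hm, rfl⟩))
  calc #(s.image Prod.fst) * (k + 1) = ∑ _i ∈ s.image Prod.fst, (k + 1) := by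
        rw [sum_const, smul_eq_mul]
    _ ≤ ∑ i ∈ s.image Prod.fst, #{m ∈ s | m.1 = i} := sum_le_sum hlong
    _ = #s := (card_eq_sum_card_fiberwise fun m hm => mem_image_of_mem _ hm).symm

theorem exists_rect_subset_Sset {t a : ℕ} (ha : 1 ≤ a) (hat : a ≤ 2 * t) :
    ∃ k, (∀ n₁ < a, ∀ n₂ < k, (n₁, n₂) ∈ Sset t) ∧ 2 * t < a * (k + 1) := by
  simp only [Sset, Set.mem_ofPred_eq]
  rcases Nat.lt_or_ge a 2 with ha1 | ha2
  · exact ⟨2 * t, fun n₁ _ n₂ _ => by omega, by nlinarith⟩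
  rcases Nat.lt_or_ge (t + 1) a with hlarge | hsmall
  · exact ⟨1, fun n₁ _ n₂ _ => by omega, by omega⟩
  refine ⟨t + 2 - a, fun n₁ _ n₂ _ => by omega, ?_⟩
  obtain ⟨b, rfl⟩ : ∃ b, t = a + b - 1 := ⟨t + 1 - a, by omega⟩
  rw [show a + b - 1 + 2 - a + 1 = b + 2 by omega]
  zify [show 1 ≤ a + b by omega]
  nlinarith

theorem evalAt_sub {F L : Type*} [Field F] [Field L] [Algebra F L]
    (e e' : AddMonoidAlgebra F (ℕ × ℕ)) (x y : L) :
    evalAt (e - e') x y = evalAt e x y - evalAt e' x y := by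
  unfold evalAt
  rw [AddMonoidAlgebra.coeff_sub]
  exact Finsupp.sum_sub_index (h := fun (s : ℕ × ℕ) c => algebraMap F L c * x ^ s.1 * y ^ s.2)
    fun _ _ _ => by rw [map_sub]; ring

theorem evalAt_pow_add {F L : Type*} [Field F] [Field L] [Algebra F L]
    (e : AddMonoidAlgebra F (ℕ × ℕ)) (x y : L) (n τ : ℕ × ℕ) :
    evalAt e (x ^ (n.1 + τ.1)) (y ^ (n.2 + τ.2)) =
      ∑ m ∈ e.coeff.support, algebraMap F L (e.coeff m) * x ^ (m.1 * τ.1) * y ^ (m.2 * τ.2) *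
        (x ^ m.1) ^ n.1 * (y ^ m.2) ^ n.2 := by
  refine sum_congr rfl fun m _ => ?_
  ring

theorem stmt_14_general {F L : Type*} [Field F] [Field L] [Algebra F L]
    (r₁ r₂ t : ℕ)
    (α₁ α₂ : L) (hα₁ : IsPrimitiveRoot α₁ r₁) (hα₂ : IsPrimitiveRoot α₂ r₂)
    (e e' : AddMonoidAlgebra F (ℕ × ℕ))
    (he : ↑e.coeff.support ⊆ Ibox r₁ r₂) (he' : ↑e'.coeff.support ⊆ Ibox r₁ r₂)
    (hw : e.coeff.support.card ≤ t) (hw' : e'.coeff.support.card ≤ t)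
    (τ : ℕ × ℕ)
    (heq : ∀ n ∈ Sset t, evalAt e (α₁ ^ (n.1 + τ.1)) (α₂ ^ (n.2 + τ.2)) =
      evalAt e' (α₁ ^ (n.1 + τ.1)) (α₂ ^ (n.2 + τ.2))) :
    e = e' := by
  classical
  by_contra hne
  set s := (e - e').coeff.support
  have hbox : ∀ m ∈ s, m.1 < r₁ ∧ m.2 < r₂ := fun m hm =>
    (mem_union.mp (Finsupp.support_sub hm)).elim (fun h => he h) (fun h => he' h)
  have hcard : #s ≤ 2 * t :=
    calc #s ≤ #(e.coeff.support ∪ e'.coeff.support) := card_le_card Finsupp.support_sub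
      _ ≤ #e.coeff.support + #e'.coeff.support := card_union_le _ _
      _ ≤ 2 * t := by omega
  have hs : s.Nonempty := Finsupp.support_nonempty_iff.mpr fun h =>
    hne (sub_eq_zero.mp (AddMonoidAlgebra.coeff_eq_zero.mp h))
  obtain ⟨k, hrect, hk⟩ :=
    exists_rect_subset_Sset (card_pos.mpr (hs.image Prod.fst)) (card_image_le.trans hcard)
  have hc : ∀ m ∈ s,
      algebraMap F L ((e - e').coeff m) * α₁ ^ (m.1 * τ.1) * α₂ ^ (m.2 * τ.2) ≠ 0 := by
    intro m hm
    have := hbox m hm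
    exact mul_ne_zero (mul_ne_zero ((map_ne_zero _).mpr (Finsupp.mem_support_iff.mp hm))
      (pow_ne_zero _ (hα₁.ne_zero (by omega)))) (pow_ne_zero _ (hα₂.ne_zero (by omega)))
  have hx : Set.InjOn (α₁ ^ ·) ↑(s.image Prod.fst) := hα₁.injOn_pow.mono fun i hi => by
    obtain ⟨m, hm, rfl⟩ := mem_image.mp hi
    exact mem_range.mpr (hbox m hm).1
  have hy : Set.InjOn (α₂ ^ ·) ↑(s.image Prod.snd) := hα₂.injOn_pow.mono fun j hj => by
    obtain ⟨m, hm, rfl⟩ := mem_image.mp hj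
    exact mem_range.mpr (hbox m hm).2
  have := card_image_fst_mul_le_card hc hx hy k fun n₁ hn₁ n₂ hn₂ => by
    rw [← evalAt_pow_add (n := (n₁, n₂)), evalAt_sub, heq _ (hrect n₁ hn₁ n₂ hn₂), sub_self]
  omega

/-- two polynomials of weight `≤ t` supported in `I` agreeing on the
syndrome values indexed by `𝒮(t)` (shifted by `τ`) coincide. -/
theorem stmt_14 {F L : Type*} [Field F] [Fintype F] [Field L] [Algebra F L]
    (r₁ r₂ t : ℕ) (ht : 1 ≤ t) (ht₁ : t ≤ r₁ / 2) (ht₂ : t ≤ r₂ / 2)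
    (hq : Nat.Coprime (r₁ * r₂) (Fintype.card F))
    (α₁ α₂ : L) (hα₁ : IsPrimitiveRoot α₁ r₁) (hα₂ : IsPrimitiveRoot α₂ r₂)
    (e e' : AddMonoidAlgebra F (ℕ × ℕ))
    (he : ↑e.coeff.support ⊆ Ibox r₁ r₂) (he' : ↑e'.coeff.support ⊆ Ibox r₁ r₂)
    (hw : e.coeff.support.card ≤ t) (hw' : e'.coeff.support.card ≤ t)
    (τ : ℕ × ℕ) (hτ : τ ∈ Ibox r₁ r₂)
    (heq : ∀ n ∈ Sset t, evalAt e (α₁ ^ (n.1 + τ.1)) (α₂ ^ (n.2 + τ.2)) =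
      evalAt e' (α₁ ^ (n.1 + τ.1)) (α₂ ^ (n.2 + τ.2))) :
    e = e' :=
  stmt_14_general r₁ r₂ t α₁ α₂ hα₁ hα₂ e e' he he' hw hw' τ heq
end
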